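/- Quasi-periodicity of the discrete-time SAFT: if c : ℤ → ℂ is absolutely summable, then for every ω ∈ ℝ, Ĉ_A(ω + Δ) = Ĉ_A(ω) · exp((Complex.I/(2b)) · (d·Δ² + 2·d·ω·Δ + Ω·Δ)); in particular |Ĉ_A(ω + Δ)| = |Ĉ_A(ω)|, i.e. the modulus of the discrete-time SAFT is periodic with period Δ = 2πb. -/

import Mathlib

/-! Shifting `ω` by `Δ = 2πb` changes the phase of the `k`-th term by
`d Δ² + 2 d ω Δ + Ω Δ - 2 k Δ`; after division by `2b` the last summand is `-2πk`, so its
exponential is `1`, and the remaining unimodular factor does not depend on `k`. -/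

open MeasureTheory Real

/-- The discrete-time SAFT of a sequence `c : ℤ → ℂ`, with `Ω = 2*(b*q - d*p)`. -/
noncomputable def dtSAFT (a b d p q : ℝ) (c : ℤ → ℂ) (ω : ℝ) : ℂ :=
  (Real.sqrt (2 * π * b) : ℂ)⁻¹ *
    ∑' k : ℤ, c k * Complex.exp (Complex.I / (2 * b) *
      ((a * (k : ℝ) ^ 2 + d * ω ^ 2 - 2 * (k : ℝ) * ω + 2 * (b * q - d * p) * ω
        + 2 * p * (k : ℝ) : ℝ) : ℂ))

theorem Complex.norm_exp_I_div_ofReal_mul_ofReal (s x : ℝ) :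
    ‖Complex.exp (Complex.I / s * x)‖ = 1 := by
  rw [div_mul_eq_mul_div, mul_div_assoc, mul_comm, ← Complex.ofReal_div,
    Complex.norm_exp_ofReal_mul_I]

theorem exp_dtSAFT_phase_add_two_pi_mul {a b d p q : ℝ} (hb : b ≠ 0) (k : ℤ) (ω : ℝ) :
    Complex.exp (Complex.I / (2 * b) *
      ((a * (k : ℝ) ^ 2 + d * (ω + 2 * π * b) ^ 2 - 2 * (k : ℝ) * (ω + 2 * π * b)
        + 2 * (b * q - d * p) * (ω + 2 * π * b) + 2 * p * (k : ℝ) : ℝ) : ℂ)) =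
      Complex.exp (Complex.I / (2 * b) *
        ((a * (k : ℝ) ^ 2 + d * ω ^ 2 - 2 * (k : ℝ) * ω + 2 * (b * q - d * p) * ω
          + 2 * p * (k : ℝ) : ℝ) : ℂ)) *
      Complex.exp (Complex.I / (2 * b) *
        ((d * (2 * π * b) ^ 2 + 2 * d * ω * (2 * π * b)
          + 2 * (b * q - d * p) * (2 * π * b) : ℝ) : ℂ)) := by
  rw [← Complex.exp_add, Complex.exp_eq_exp_iff_exists_int]
  refine ⟨-k, ?_⟩
  have hb' : (b : ℂ) ≠ 0 := by exact_mod_cast hb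
  push_cast
  field_simp
  ring

theorem dtSAFT_add_two_pi_mul {a b d p q : ℝ} (hb : b ≠ 0) (c : ℤ → ℂ) (ω : ℝ) :
    dtSAFT a b d p q c (ω + 2 * π * b) =
      dtSAFT a b d p q c ω * Complex.exp (Complex.I / (2 * b) *
        ((d * (2 * π * b) ^ 2 + 2 * d * ω * (2 * π * b)
          + 2 * (b * q - d * p) * (2 * π * b) : ℝ) : ℂ)) := by
  simp only [dtSAFT, exp_dtSAFT_phase_add_two_pi_mul hb, ← mul_assoc, tsum_mul_right]

theorem dtSAFT_quasi_periodic_general (a b d p q : ℝ) (hb : 0 < b)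
    (cseq : ℤ → ℂ) :
    ∀ ω : ℝ,
      dtSAFT a b d p q cseq (ω + 2 * π * b) =
        dtSAFT a b d p q cseq ω * Complex.exp (Complex.I / (2 * b) *
          ((d * (2 * π * b) ^ 2 + 2 * d * ω * (2 * π * b)
            + 2 * (b * q - d * p) * (2 * π * b) : ℝ) : ℂ)) ∧
      ‖dtSAFT a b d p q cseq (ω + 2 * π * b)‖ = ‖dtSAFT a b d p q cseq ω‖ := by
  intro ω
  refine ⟨dtSAFT_add_two_pi_mul hb.ne' cseq ω, ?_⟩
  rw [dtSAFT_add_two_pi_mul hb.ne', norm_mul, ← Complex.ofReal_ofNat, ← Complex.ofReal_mul,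
    Complex.norm_exp_I_div_ofReal_mul_ofReal, mul_one]

/-- Quasi-periodicity of the discrete-time SAFT: the modulus is `Δ = 2πb`-periodic. -/
theorem dtSAFT_quasi_periodic (a b c d p q : ℝ) (hb : 0 < b) (habcd : a * d - b * c = 1)
    (cseq : ℤ → ℂ) (hc : Summable fun k : ℤ => ‖cseq k‖) :
    ∀ ω : ℝ,
      dtSAFT a b d p q cseq (ω + 2 * π * b) =
        dtSAFT a b d p q cseq ω * Complex.exp (Complex.I / (2 * b) *
          ((d * (2 * π * b) ^ 2 + 2 * d * ω * (2 * π * b)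
            + 2 * (b * q - d * p) * (2 * π * b) : ℝ) : ℂ)) ∧
      ‖dtSAFT a b d p q cseq (ω + 2 * π * b)‖ = ‖dtSAFT a b d p q cseq ω‖ :=
  dtSAFT_quasi_periodic_general a b d p q hb cseq
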